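/- arXiv:2005.02126 — 3 statements merged into one kernel-verified Lean document; each statement's English description precedes it below -/
import Mathlib

section
/- Completeness of the upper end of the robust satisfaction interval: for every STL formula φ over a finite set Y of variables, every finite signal σ = u₀,…,u_{n−1} ∈ (ℝ^Y)^*, and every k ∈ ℕ, if the suffix σ[k..|σ|−1] belongs to the supremum finite semantics ⟦φ⟧_sup then sup(RoSI(φ,σ,k)) ≥ 0. -/
namespace STLpaper

/-- Discrete-time STL formulas over a set `Y` of variables:
`⊤ | y > c | y < c | ¬φ | φ ∨ φ' | 𝒳 φ | φ U_{[i,j]} φ'` with `i ≤ j`, `i j ∈ ℕ ∪ {+∞}`. -/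
inductive STL (Y : Type) : Type where
  | top : STL Y
  | gt : Y → ℝ → STL Y
  | lt : Y → ℝ → STL Y
  | neg : STL Y → STL Y
  | or : STL Y → STL Y → STL Y
  | next : STL Y → STL Y
  | untl : (i j : ℕ∞) → i ≤ j → STL Y → STL Y → STL Y

variable {Y : Type}

/-- The satisfaction relation `(σ, k) ⊨ φ` for an infinite signal `σ : ℕ → Y → ℝ`. -/
def Sat (σ : ℕ → Y → ℝ) : STL Y → ℕ → Prop
  | .top, _ => True
  | .gt y c, k => σ k y > c
  | .lt y c, k => σ k y < c
  | .neg φ, k => ¬ Sat σ φ k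
  | .or φ ψ, k => Sat σ φ k ∨ Sat σ ψ k
  | .next φ, k => Sat σ φ (k + 1)
  | .untl i j _ φ ψ, k =>
      ∃ l : ℕ, ((k : ℕ∞) + i ≤ (l : ℕ∞) ∧ (l : ℕ∞) ≤ (k : ℕ∞) + j) ∧
        Sat σ ψ l ∧ ∀ m : ℕ, k ≤ m → m ≤ l → Sat σ φ m

/-- The robust semantics `ρ(φ, σ, k) ∈ ℝ ∪ {±∞}` for an infinite signal `σ`. -/
noncomputable def Rob (σ : ℕ → Y → ℝ) : STL Y → ℕ → EReal
  | .top, _ => ⊤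
  | .gt y c, k => ((σ k y - c : ℝ) : EReal)
  | .lt y c, k => ((-(σ k y) + c : ℝ) : EReal)
  | .neg φ, k => - Rob σ φ k
  | .or φ ψ, k => max (Rob σ φ k) (Rob σ ψ k)
  | .next φ, k => Rob σ φ (k + 1)
  | .untl i j _ φ ψ, k =>
      ⨆ l ∈ {l : ℕ | (k : ℕ∞) + i ≤ (l : ℕ∞) ∧ (l : ℕ∞) ≤ (k : ℕ∞) + j},
        min (Rob σ ψ l) (⨅ m ∈ Finset.Icc k l, Rob σ φ m)

/-- Concatenation `σ · σ'` of a finite signal with an infinite one. -/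
def cat (σ : List (Y → ℝ)) (σ' : ℕ → Y → ℝ) : ℕ → Y → ℝ :=
  fun n => if h : n < σ.length then σ.get ⟨n, h⟩ else σ' (n - σ.length)

/-- Supremum finite semantics `⟦φ⟧_sup`. -/
def supSem (φ : STL Y) : Set (List (Y → ℝ)) :=
  {σ | ∃ σ' : ℕ → Y → ℝ, Sat (cat σ σ') φ 0}

/-- Infimum finite semantics `⟦φ⟧_inf`. -/
def infSem (φ : STL Y) : Set (List (Y → ℝ)) :=
  {σ | ∀ σ' : ℕ → Y → ℝ, Sat (cat σ σ') φ 0}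

/-- Upper end of the robust satisfaction interval `RoSI(φ, σ, k)`. -/
noncomputable def RoSIsup (φ : STL Y) (σ : List (Y → ℝ)) (k : ℕ) : EReal :=
  ⨆ σ' : ℕ → Y → ℝ, Rob (cat σ σ') φ k

/-- Lower end of the robust satisfaction interval `RoSI(φ, σ, k)`. -/
noncomputable def RoSIinf (φ : STL Y) (σ : List (Y → ℝ)) (k : ℕ) : EReal :=
  ⨅ σ' : ℕ → Y → ℝ, Rob (cat σ σ') φ k

/-- The inductively computed interval `[ρ](φ, σ, k)`, as a pair `(inf, sup)`. -/
noncomputable def finRob (σ : List (Y → ℝ)) : STL Y → ℕ → EReal × EReal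
  | .top, _ => (⊤, ⊤)
  | .gt y c, k =>
      if h : k < σ.length then
        (((σ.get ⟨k, h⟩ y - c : ℝ) : EReal), ((σ.get ⟨k, h⟩ y - c : ℝ) : EReal))
      else (⊥, ⊤)
  | .lt y c, k =>
      if h : k < σ.length then
        (((-(σ.get ⟨k, h⟩ y) + c : ℝ) : EReal), ((-(σ.get ⟨k, h⟩ y) + c : ℝ) : EReal))
      else (⊥, ⊤)
  | .neg φ, k => (- (finRob σ φ k).2, - (finRob σ φ k).1)
  | .or φ ψ, k =>
      (max (finRob σ φ k).1 (finRob σ ψ k).1, max (finRob σ φ k).2 (finRob σ ψ k).2)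
  | .next φ, k => finRob σ φ (k + 1)
  | .untl i j _ φ ψ, k =>
      (⨆ l ∈ {l : ℕ | (k : ℕ∞) + i ≤ (l : ℕ∞) ∧ (l : ℕ∞) ≤ (k : ℕ∞) + j},
          min ((finRob σ ψ l).1) (⨅ m ∈ Finset.Icc k l, (finRob σ φ m).1),
       ⨆ l ∈ {l : ℕ | (k : ℕ∞) + i ≤ (l : ℕ∞) ∧ (l : ℕ∞) ≤ (k : ℕ∞) + j},
          min ((finRob σ ψ l).2) (⨅ m ∈ Finset.Icc k l, (finRob σ φ m).2))

end STLpaper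

/-!
A witness continuation `σ'` with `σ[k..] · σ' ⊨ φ` gives a continuation `τ` of the whole of `σ`
whose suffix from `k` on is `σ[k..] · σ'`. Satisfaction is invariant under shifting the time
origin, so `(σ · τ, k) ⊨ φ`. Robustness is nonnegative wherever the formula holds (proved
together with nonpositivity where it fails, since negation swaps the two), so
`ρ(φ, σ · τ, k) ≥ 0` bounds the supremum over all continuations from below.
-/

namespace STLpaper

variable {Y : Type}

theorem rob_nonneg_of_sat_and_rob_nonpos_of_not_sat (φ : STL Y) (σ : ℕ → Y → ℝ) (k : ℕ) :
    (Sat σ φ k → 0 ≤ Rob σ φ k) ∧ (¬ Sat σ φ k → Rob σ φ k ≤ 0) := by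
  induction φ generalizing k with
  | top => exact ⟨fun _ => le_top, fun h => absurd trivial h⟩
  | gt y c =>
    simp only [Sat, Rob, gt_iff_lt, not_lt, EReal.coe_nonneg, EReal.coe_nonpos, sub_nonneg,
      sub_nonpos]
    exact ⟨le_of_lt, id⟩
  | lt y c =>
    simp only [Sat, Rob, not_lt, EReal.coe_nonneg, EReal.coe_nonpos]
    exact ⟨fun h => by linarith, fun h => by linarith⟩
  | neg φ ih =>
    simp only [Sat, Rob, not_not, EReal.neg_nonneg, EReal.neg_le_zero]
    exact ⟨(ih k).2, (ih k).1⟩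
  | or φ ψ ih₁ ih₂ =>
    simp only [Sat, Rob, not_or, le_max_iff, max_le_iff]
    exact ⟨Or.imp (ih₁ k).1 (ih₂ k).1, And.imp (ih₁ k).2 (ih₂ k).2⟩
  | next φ ih => exact ih (k + 1)
  | untl i j _ φ ψ ih₁ ih₂ =>
    constructor
    · rintro ⟨l, hl, hψ, hφ⟩
      refine le_iSup₂_of_le l hl (le_min ((ih₂ l).1 hψ) (le_iInf₂ fun m hm => ?_))
      rw [Finset.mem_Icc] at hm
      exact (ih₁ m).1 (hφ m hm.1 hm.2)
    · intro h
      refine iSup₂_le fun l hl => ?_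
      by_cases hψ : Sat σ ψ l
      · obtain ⟨m, hkm, hml, hφ⟩ : ∃ m, k ≤ m ∧ m ≤ l ∧ ¬ Sat σ φ m := by
          by_contra! hall
          exact h ⟨l, hl, hψ, hall⟩
        exact min_le_of_right_le
          ((iInf₂_le m (Finset.mem_Icc.mpr ⟨hkm, hml⟩)).trans ((ih₁ m).2 hφ))
      · exact min_le_of_left_le ((ih₂ l).2 hψ)

theorem rob_nonneg_of_sat {φ : STL Y} {σ : ℕ → Y → ℝ} {k : ℕ} (h : Sat σ φ k) :
    0 ≤ Rob σ φ k :=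
  (rob_nonneg_of_sat_and_rob_nonpos_of_not_sat φ σ k).1 h

theorem natCast_add_add_le_natCast_add_iff (k a b : ℕ) (i : ℕ∞) :
    ((k + a : ℕ) : ℕ∞) + i ≤ ((k + b : ℕ) : ℕ∞) ↔ (a : ℕ∞) + i ≤ b := by
  push_cast
  rw [add_assoc]
  exact ENat.add_le_add_iff_left (ENat.natCast_ne_top k)

theorem natCast_add_le_natCast_add_add_iff (k a b : ℕ) (j : ℕ∞) :
    ((k + b : ℕ) : ℕ∞) ≤ ((k + a : ℕ) : ℕ∞) + j ↔ (b : ℕ∞) ≤ a + j := by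
  push_cast
  rw [add_assoc]
  exact ENat.add_le_add_iff_left (ENat.natCast_ne_top k)

theorem sat_shift_iff (φ : STL Y) (σ : ℕ → Y → ℝ) (k n : ℕ) :
    Sat (fun m => σ (k + m)) φ n ↔ Sat σ φ (k + n) := by
  induction φ generalizing n with
  | top | gt | lt => exact Iff.rfl
  | neg φ ih => exact not_congr (ih n)
  | or φ ψ ih₁ ih₂ => exact or_congr (ih₁ n) (ih₂ n)
  | next φ ih => exact ih (n + 1)
  | untl i j _ φ ψ ih₁ ih₂ =>
    constructor
    · rintro ⟨l, ⟨hil, hlj⟩, hψ, hφ⟩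
      refine ⟨k + l, ⟨(natCast_add_add_le_natCast_add_iff k n l i).2 hil,
        (natCast_add_le_natCast_add_add_iff k n l j).2 hlj⟩, (ih₂ l).1 hψ, fun m hkm hml => ?_⟩
      obtain ⟨m, rfl⟩ := Nat.exists_eq_add_of_le (le_of_add_le_left hkm)
      exact (ih₁ m).1 (hφ m (by omega) (by omega))
    · rintro ⟨l, ⟨hil, hlj⟩, hψ, hφ⟩
      obtain ⟨l, rfl⟩ : ∃ l', l = k + l' := by
        refine Nat.exists_eq_add_of_le (le_of_add_le_left (?_ : k + n ≤ l))
        exact_mod_cast le_self_add.trans hil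
      refine ⟨l, ⟨(natCast_add_add_le_natCast_add_iff k n l i).1 hil,
        (natCast_add_le_natCast_add_add_iff k n l j).1 hlj⟩, (ih₂ l).2 hψ,
        fun m hnm hml => (ih₁ m).2 (hφ (k + m) (by omega) (by omega))⟩

-- If `k > |σ|` then `σ[k..]` is empty, and the first `k - |σ|` samples of the continuation
-- are never read.
theorem cat_shift_eq_cat_drop (σ : List (Y → ℝ)) (σ' : ℕ → Y → ℝ) (k : ℕ) :
    (fun m => cat σ (fun n => σ' (n - (k - σ.length))) (k + m)) = cat (σ.drop k) σ' := by
  funext m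
  unfold cat
  by_cases hkm : k + m < σ.length
  · rw [dif_pos hkm, dif_pos (by simp only [List.length_drop]; omega)]
    simp only [List.get_eq_getElem, List.getElem_drop]
  · rw [dif_neg hkm, dif_neg (by simp only [List.length_drop]; omega), List.length_drop]
    exact congrArg σ' (by omega)

end STLpaper

open STLpaper in
theorem mem_supSem_RoSIsup_nonneg_general (Y : Type) (φ : STL Y)
    (σ : List (Y → ℝ)) (k : ℕ) (h : σ.drop k ∈ supSem φ) :
    0 ≤ RoSIsup φ σ k := by
  obtain ⟨σ', hsat⟩ := h
  have hτ : Sat (cat σ fun n => σ' (n - (k - σ.length))) φ (k + 0) := by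
    rw [← sat_shift_iff, cat_shift_eq_cat_drop]
    exact hsat
  exact (rob_nonneg_of_sat hτ).trans (le_iSup (fun τ => Rob (cat σ τ) φ k) _)

open STLpaper in
/-- Completeness of the upper end of the robust satisfaction interval:
if `σ[k..|σ|−1] ∈ ⟦φ⟧_sup` then `sup(RoSI(φ,σ,k)) ≥ 0`. -/
theorem mem_supSem_RoSIsup_nonneg (Y : Type) [Fintype Y] (φ : STL Y)
    (σ : List (Y → ℝ)) (k : ℕ) (h : σ.drop k ∈ supSem φ) :
    0 ≤ RoSIsup φ σ k :=
  mem_supSem_RoSIsup_nonneg_general Y φ σ k h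
end

section
/- Soundness of the lower end of the robust satisfaction interval: for every STL formula φ over a finite set Y of variables, every finite signal σ = u₀,…,u_{n−1} ∈ (ℝ^Y)^*, and every k ∈ ℕ, if inf(RoSI(φ,σ,k)) > 0 then the suffix σ[k..|σ|−1] belongs to the infimum finite semantics ⟦φ⟧_inf. -/
/-!
Positive robustness implies satisfaction and satisfaction implies nonnegative robustness; the
two facts are proved together by induction on the formula, since negation swaps them.
Every continuation `σ'` of the suffix `σ[k..]` is the shift by `k` of some continuation of `σ`
(padded with `σ' 0` when `k > |σ|`), and satisfaction commutes with shifting the signal, so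
`0 < RoSIinf φ σ k` makes `σ[k..] · σ'` satisfy `φ`.
-/

namespace STLpaper

variable {Y : Type}

theorem sat_of_rob_pos_and_rob_nonneg_of_sat (σ : ℕ → Y → ℝ) (φ : STL Y) (k : ℕ) :
    (0 < Rob σ φ k → Sat σ φ k) ∧ (Sat σ φ k → 0 ≤ Rob σ φ k) := by
  induction φ generalizing k with
  | top => exact ⟨fun _ => trivial, fun _ => le_top⟩
  | gt | lt =>
    simp only [Rob, Sat, EReal.coe_pos, EReal.coe_nonneg]
    constructor <;> intro <;> linarith
  | neg φ ih =>
    simp only [Rob, Sat, EReal.neg_pos, EReal.neg_nonneg]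
    exact ⟨fun hneg hsat => (ih k).2 hsat |>.not_gt hneg,
      fun hnsat => not_lt.mp (mt (ih k).1 hnsat)⟩
  | or φ ψ ihφ ihψ =>
    simp only [Rob, Sat, lt_max_iff, le_max_iff]
    exact ⟨Or.imp (ihφ k).1 (ihψ k).1, Or.imp (ihφ k).2 (ihψ k).2⟩
  | next φ ih => exact ih (k + 1)
  | untl i j _ φ ψ ihφ ihψ =>
    simp only [Rob, Sat, Set.mem_ofPred_eq, lt_iSup_iff, lt_min_iff]
    constructor
    · rintro ⟨l, hl, hψ, hφ⟩
      refine ⟨l, hl, (ihψ l).1 hψ, fun m hkm hml => (ihφ m).1 ?_⟩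
      exact hφ.trans_le (biInf_le _ (Finset.mem_Icc.mpr ⟨hkm, hml⟩))
    · rintro ⟨l, hl, hψ, hφ⟩
      refine le_iSup₂_of_le (f := fun l _ => min (Rob σ ψ l) (⨅ m ∈ Finset.Icc k l, Rob σ φ m))
        l hl (le_min ((ihψ l).2 hψ) (le_iInf₂ fun m hm => ?_))
      rw [Finset.mem_Icc] at hm
      exact (ihφ m).2 (hφ m hm.1 hm.2)

theorem sat_of_rob_pos {σ : ℕ → Y → ℝ} {φ : STL Y} {k : ℕ} (h : 0 < Rob σ φ k) : Sat σ φ k :=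
  (sat_of_rob_pos_and_rob_nonneg_of_sat σ φ k).1 h

theorem sat_comp_add_iff (σ : ℕ → Y → ℝ) (k : ℕ) (φ : STL Y) (m : ℕ) :
    Sat (fun n => σ (n + k)) φ m ↔ Sat σ φ (m + k) := by
  induction φ generalizing m with
  | top | gt | lt => rfl
  | neg φ ih => exact not_congr (ih m)
  | or φ ψ ihφ ihψ => exact or_congr (ihφ m) (ihψ m)
  | next φ ih => simpa only [Sat, Nat.add_right_comm m 1 k] using ih (m + 1)
  | untl i j _ φ ψ ihφ ihψ =>
    have window (l : ℕ) : ((m + k : ℕ) : ℕ∞) + i ≤ ((l + k : ℕ) : ℕ∞) ∧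
        ((l + k : ℕ) : ℕ∞) ≤ ((m + k : ℕ) : ℕ∞) + j ↔ (m : ℕ∞) + i ≤ l ∧ (l : ℕ∞) ≤ m + j := by
      push_cast
      simp only [add_right_comm _ (k : ℕ∞), ENat.add_le_add_iff_right (ENat.natCast_ne_top k)]
    simp only [Sat]
    constructor
    · rintro ⟨l, hl, hψ, hφ⟩
      refine ⟨l + k, (window l).2 hl, (ihψ l).1 hψ, fun n hkn hnl => ?_⟩
      obtain ⟨n, rfl⟩ := Nat.exists_eq_add_of_le' (le_of_add_le_right hkn)
      exact (ihφ n).1 (hφ n (by omega) (by omega))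
    · rintro ⟨l, hl, hψ, hφ⟩
      have hkl : k ≤ l := by
        have : ((m + k : ℕ) : ℕ∞) ≤ l := le_self_add.trans hl.1
        exact le_of_add_le_right (Nat.cast_le.mp this)
      obtain ⟨l, rfl⟩ := Nat.exists_eq_add_of_le' hkl
      exact ⟨l, (window l).1 hl, (ihψ l).2 hψ,
        fun n hmn hnl => (ihφ n).2 (hφ (n + k) (by omega) (by omega))⟩

theorem cat_drop (σ : List (Y → ℝ)) (σ' : ℕ → Y → ℝ) (k : ℕ) :
    cat (σ.drop k) σ' = fun n => cat σ (fun n => σ' (n - (k - σ.length))) (n + k) := by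
  funext n
  by_cases hn : n + k < σ.length
  · simp [cat, hn, show n < σ.length - k by omega, add_comm k]
  · simp only [cat, List.length_drop, dif_neg hn, dif_neg (show ¬n < σ.length - k by omega)]
    congr 1
    omega

end STLpaper

open STLpaper in
theorem RoSIinf_pos_mem_infSem_general (Y : Type) (φ : STL Y)
    (σ : List (Y → ℝ)) (k : ℕ) (h : 0 < RoSIinf φ σ k) :
    σ.drop k ∈ infSem φ := by
  intro σ'
  rw [cat_drop, sat_comp_add_iff, zero_add]
  exact sat_of_rob_pos (h.trans_le (iInf_le _ _))

open STLpaper in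
/-- Soundness of the lower end of the robust satisfaction interval:
if `inf(RoSI(φ,σ,k)) > 0` then `σ[k..|σ|−1] ∈ ⟦φ⟧_inf`. -/
theorem RoSIinf_pos_mem_infSem (Y : Type) [Fintype Y] (φ : STL Y)
    (σ : List (Y → ℝ)) (k : ℕ) (h : 0 < RoSIinf φ σ k) :
    σ.drop k ∈ infSem φ :=
  RoSIinf_pos_mem_infSem_general Y φ σ k h
end

section
/- Correctness of the computable robustness upper bound for falsification: for every STL formula φ over a finite set Y of variables and every finite signal σ = u₀,…,u_{n−1} ∈ (ℝ^Y)^*, if sup([ρ](φ,σ,0)) < 0 then for every infinite signal σ' ∈ (ℝ^Y)^ω we have σ·σ' ⊭ φ. -/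
/-
A satisfied formula has nonnegative robustness and a violated one nonpositive robustness, so
`ρ(φ, σ·σ', 0) ≤ sup [ρ](φ, σ, 0) < 0` rules out `σ·σ' ⊨ φ`. The enclosure
`ρ(φ, σ·σ', k) ∈ [ρ](φ, σ, k)` holds for every continuation `σ'`: atoms inside the prefix are
read off `σ`, atoms beyond it are enclosed by `[-∞, +∞]`, and all other connectives are
monotone in each argument, except negation, which swaps the two ends of the interval.
-/

namespace STLpaper

variable {Y : Type}

theorem rob_nonneg_of_sat_and_nonpos_of_not_sat (σ : ℕ → Y → ℝ) (φ : STL Y) (k : ℕ) :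
    (Sat σ φ k → 0 ≤ Rob σ φ k) ∧ (¬ Sat σ φ k → Rob σ φ k ≤ 0) := by
  induction φ generalizing k with
  | top => exact ⟨fun _ => le_top, fun h => absurd trivial h⟩
  | gt y c =>
    simp only [Sat, Rob, EReal.coe_nonneg, EReal.coe_nonpos, sub_nonneg, sub_nonpos, gt_iff_lt,
      not_lt]
    exact ⟨le_of_lt, id⟩
  | lt y c =>
    simp only [Sat, Rob, EReal.coe_nonneg, EReal.coe_nonpos, not_lt]
    exact ⟨fun h => by linarith, fun h => by linarith⟩
  | neg φ ih =>
    simp only [Sat, Rob, not_not, EReal.neg_nonneg, EReal.neg_le_zero]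
    exact ⟨(ih k).2, (ih k).1⟩
  | or φ ψ ihφ ihψ =>
    simp only [Sat, Rob, not_or, le_max_iff, max_le_iff]
    exact ⟨Or.imp (ihφ k).1 (ihψ k).1, And.imp (ihφ k).2 (ihψ k).2⟩
  | next φ ih => exact ih (k + 1)
  | untl i j hij φ ψ ihφ ihψ =>
    constructor
    · rintro ⟨l, hl, hψ, hφ⟩
      have hmin : 0 ≤ min (Rob σ ψ l) (⨅ m ∈ Finset.Icc k l, Rob σ φ m) :=
        le_min ((ihψ l).1 hψ) <| le_iInf₂ fun m hm =>
          (ihφ m).1 (hφ m (Finset.mem_Icc.1 hm).1 (Finset.mem_Icc.1 hm).2)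
      exact hmin.trans (le_biSup (fun l => min (Rob σ ψ l) (⨅ m ∈ Finset.Icc k l, Rob σ φ m)) hl)
    · intro h
      refine iSup₂_le fun l hl => ?_
      by_cases hψ : Sat σ ψ l
      · obtain ⟨m, hkm, hml, hφ⟩ : ∃ m, k ≤ m ∧ m ≤ l ∧ ¬ Sat σ φ m := by
          by_contra! hφ
          exact h ⟨l, hl, hψ, hφ⟩
        exact (min_le_right _ _).trans <|
          (biInf_le _ (Finset.mem_Icc.2 ⟨hkm, hml⟩)).trans ((ihφ m).2 hφ)
      · exact (min_le_left _ _).trans ((ihψ l).2 hψ)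

theorem rob_cat_mem_Icc_finRob (σ : List (Y → ℝ)) (σ' : ℕ → Y → ℝ) (φ : STL Y) (k : ℕ) :
    Rob (cat σ σ') φ k ∈ Set.Icc (finRob σ φ k).1 (finRob σ φ k).2 := by
  induction φ generalizing k with
  | top => simp [finRob, Rob]
  | gt y c | lt y c =>
    by_cases hk : k < σ.length
    · simp [finRob, Rob, cat, hk]
    · simp [finRob, hk]
  | neg φ ih => exact ⟨EReal.neg_le_neg_iff.2 (ih k).2, EReal.neg_le_neg_iff.2 (ih k).1⟩
  | or φ ψ ihφ ihψ => exact ⟨max_le_max (ihφ k).1 (ihψ k).1, max_le_max (ihφ k).2 (ihψ k).2⟩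
  | next φ ih => exact ih (k + 1)
  | untl i j hij φ ψ ihφ ihψ =>
    exact ⟨iSup₂_mono fun l _ => min_le_min (ihψ l).1 (iInf₂_mono fun m _ => (ihφ m).1),
      iSup₂_mono fun l _ => min_le_min (ihψ l).2 (iInf₂_mono fun m _ => (ihφ m).2)⟩

end STLpaper

open STLpaper in
theorem finRob_sup_neg_falsified_general (Y : Type) (φ : STL Y)
    (σ : List (Y → ℝ)) (h : (finRob σ φ 0).2 < 0) :
    ∀ σ' : ℕ → Y → ℝ, ¬ Sat (cat σ σ') φ 0 := fun σ' hsat =>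
  ((rob_nonneg_of_sat_and_nonpos_of_not_sat _ φ 0).1 hsat
    |>.trans (rob_cat_mem_Icc_finRob σ σ' φ 0).2).not_gt h

open STLpaper in
/-- Correctness of the computable robustness upper bound for falsification:
if `sup([ρ](φ,σ,0)) < 0` then for every infinite `σ'`, `σ·σ' ⊭ φ`. -/
theorem finRob_sup_neg_falsified (Y : Type) [Fintype Y] (φ : STL Y)
    (σ : List (Y → ℝ)) (h : (finRob σ φ 0).2 < 0) :
    ∀ σ' : ℕ → Y → ℝ, ¬ Sat (cat σ σ') φ 0 :=
  finRob_sup_neg_falsified_general Y φ σ h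
end
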